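/- arXiv:2410.13634 — 5 statements merged into one kernel-verified Lean document; each statement's English description precedes it below -/
import Mathlib

section
/- Let x_u, x_v, y_u, y_v be vectors in ℝ³ with (x_u · x_u) = λ, (x_v · x_v) = λ, (x_u · x_v) = 0 and λ > 0. Then the equation y_u × x_v = y_v × x_u holds if and only if the three scalar equations hold: (y_u · (x_u × x_v)) = 0, (y_v · (x_u × x_v)) = 0, and (y_u · x_u) + (y_v · x_v) = 0. -/
open Matrix

private lemma bac_cab (u v w : Fin 3 → ℝ) :
    crossProduct u (crossProduct v w) = (u ⬝ᵥ w) • v - (u ⬝ᵥ v) • w := by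
  funext i
  fin_cases i <;>
    simp [cross_apply, dotProduct, Fin.sum_univ_three] <;> ring

theorem darboux_eq_iff_standard_system (lam : ℝ) (xu xv yu yv : Fin 3 → ℝ)
    (hlam : 0 < lam)
    (h1 : xu ⬝ᵥ xu = lam) (h2 : xv ⬝ᵥ xv = lam) (h3 : xu ⬝ᵥ xv = 0) :
    crossProduct yu xv = crossProduct yv xu ↔
      (yu ⬝ᵥ crossProduct xu xv = 0 ∧ yv ⬝ᵥ crossProduct xu xv = 0 ∧
        (yu ⬝ᵥ xu) + (yv ⬝ᵥ xv) = 0) := by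
  constructor
  · intro h
    have hA : yu ⬝ᵥ crossProduct xu xv = 0 := by
      have e1 : xu ⬝ᵥ crossProduct yu xv = xu ⬝ᵥ crossProduct yv xu := by rw [h]
      have e2 : xu ⬝ᵥ crossProduct yv xu = 0 := dot_cross_self yv xu
      have e3 : xu ⬝ᵥ crossProduct yu xv = yu ⬝ᵥ crossProduct xv xu :=
        triple_product_permutation xu yu xv
      have e4 : crossProduct xv xu = -(crossProduct xu xv) := (cross_anticomm xu xv).symm
      rw [e3, e4, dotProduct_neg] at e1
      rw [e2] at e1
      linarith
    have hB : yv ⬝ᵥ crossProduct xu xv = 0 := by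
      have e1 : xv ⬝ᵥ crossProduct yu xv = xv ⬝ᵥ crossProduct yv xu := by rw [h]
      have e2 : xv ⬝ᵥ crossProduct yu xv = 0 := dot_cross_self yu xv
      have e3 : xv ⬝ᵥ crossProduct yv xu = yv ⬝ᵥ crossProduct xu xv :=
        triple_product_permutation xv yv xu
      rw [e2, e3] at e1
      linarith
    have hC : (yu ⬝ᵥ xu) + (yv ⬝ᵥ xv) = 0 := by
      have e1 : crossProduct xu xv ⬝ᵥ crossProduct yu xv
          = crossProduct xu xv ⬝ᵥ crossProduct yv xu := by rw [h]
      rw [cross_dot_cross, cross_dot_cross] at e1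
      have hc1 : xu ⬝ᵥ yu = yu ⬝ᵥ xu := dotProduct_comm _ _
      have hc2 : xv ⬝ᵥ yv = yv ⬝ᵥ xv := dotProduct_comm _ _
      have hc3 : xv ⬝ᵥ xu = 0 := by rw [dotProduct_comm, h3]
      rw [h1, h2, h3, hc1, hc2, hc3] at e1
      have : lam * (yu ⬝ᵥ xu + yv ⬝ᵥ xv) = 0 := by ring_nf; ring_nf at e1; linarith
      have := mul_eq_zero.mp this
      rcases this with h' | h'
      · exact absurd h' (ne_of_gt hlam)
      · exact h'
    exact ⟨hA, hB, hC⟩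
  · rintro ⟨hA, hB, hC⟩
    set n := crossProduct xu xv with hn
    set w := crossProduct yu xv - crossProduct yv xu with hw
    have hwu : xu ⬝ᵥ w = 0 := by
      rw [hw, dotProduct_sub, dot_cross_self yv xu,
        triple_product_permutation xu yu xv, ← cross_anticomm xu xv, dotProduct_neg, ← hn, hA]
      ring
    have hwv : xv ⬝ᵥ w = 0 := by
      rw [hw, dotProduct_sub, dot_cross_self yu xv,
        triple_product_permutation xv yv xu, ← hn, hB]
      ring
    have hwn : n ⬝ᵥ w = 0 := by
      rw [hw, dotProduct_sub, hn, cross_dot_cross, cross_dot_cross,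
        h1, h2, h3, dotProduct_comm xu yu, dotProduct_comm xv yv,
        dotProduct_comm xv xu, h3]
      nlinarith [hC]
    have hnw : crossProduct n w = 0 := by
      have : crossProduct n w = -(crossProduct w n) := (cross_anticomm w n).symm
      rw [this, hn, bac_cab w xu xv, dotProduct_comm w xv, dotProduct_comm w xu,
        hwu, hwv]
      simp
    have hnn : n ⬝ᵥ n = lam * lam := by
      rw [hn, cross_dot_cross, h1, h2, h3]; ring
    have key : (lam * lam) • w = 0 := by
      have t := bac_cab n n w
      rw [hnw, hwn, hnn, map_zero, zero_smul, zero_sub] at t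
      exact neg_eq_zero.mp t.symm
    have hwz : w = 0 := by
      have hne : lam * lam ≠ 0 := by positivity
      exact (smul_eq_zero.mp key).resolve_left hne
    have := sub_eq_zero.mp (hw ▸ hwz)
    exact this
end

section
/- Let x : U → ℝ³ be a smooth parameterization on an open set U ⊆ ℝ² satisfying the isothermal conditions (x_u · x_u) = λ, (x_v · x_v) = λ, (x_u · x_v) = 0 with λ > 0 on U, let n = λ⁻¹(x_u × x_v), and define h₁₁ = −(x_u · n_u), h₁₂ = −(x_u · n_v), h₂₁ = −(x_v · n_u), h₂₂ = −(x_v · n_v). If y : U → ℝ³ is smooth and satisfies (y_u · n) = 0 and (y_v · n) = 0 on U, and the Weingarten relations n_u = −λ⁻¹(h₁₁ x_u + h₁₂ x_v), n_v = −λ⁻¹(h₂₁ x_u + h₂₂ x_v) hold, then h₂₁(y_u · x_u) + h₂₂(y_u · x_v) − h₁₁(y_v · x_u) − h₁₂(y_v · x_v) = 0 on U. -/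
open Matrix Filter Topology

private lemma hasDerivAt_lineU {E : Type*} [NormedAddCommGroup E] [NormedSpace ℝ E]
    {f : ℝ × ℝ → E} {f' : ℝ × ℝ →L[ℝ] E} {q : ℝ × ℝ} (hf : HasFDerivAt f f' q) :
    HasDerivAt (fun u => f (u, q.2)) (f' (1, 0)) q.1 := by
  have h : HasDerivAt (fun u : ℝ => ((u, q.2) : ℝ × ℝ)) ((1 : ℝ), (0 : ℝ)) q.1 :=
    (hasDerivAt_id q.1).prodMk (hasDerivAt_const q.1 q.2)
  exact hf.comp_hasDerivAt q.1 h

private lemma hasDerivAt_lineV {E : Type*} [NormedAddCommGroup E] [NormedSpace ℝ E]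
    {f : ℝ × ℝ → E} {f' : ℝ × ℝ →L[ℝ] E} {q : ℝ × ℝ} (hf : HasFDerivAt f f' q) :
    HasDerivAt (fun v => f (q.1, v)) (f' (0, 1)) q.2 := by
  have h : HasDerivAt (fun v : ℝ => ((q.1, v) : ℝ × ℝ)) ((0 : ℝ), (1 : ℝ)) q.2 :=
    (hasDerivAt_const q.2 q.1).prodMk (hasDerivAt_id q.2)
  exact hf.comp_hasDerivAt q.2 h

private lemma diffAt_of_contDiffOn {E F : Type*} [NormedAddCommGroup E] [NormedSpace ℝ E]
    [NormedAddCommGroup F] [NormedSpace ℝ F] {f : E → F} {U : Set E} (hU : IsOpen U)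
    (hf : ContDiffOn ℝ (⊤ : ℕ∞) f U) {p : E} (hp : p ∈ U) : DifferentiableAt ℝ f p :=
  (hf.differentiableOn (by simp)).differentiableAt (hU.mem_nhds hp)

/-- Partial derivative with respect to the first variable. -/
noncomputable def pu (f : ℝ × ℝ → Fin 3 → ℝ) (p : ℝ × ℝ) : Fin 3 → ℝ :=
  fun i => deriv (fun u => f (u, p.2) i) p.1

/-- Partial derivative with respect to the second variable. -/
noncomputable def pv (f : ℝ × ℝ → Fin 3 → ℝ) (p : ℝ × ℝ) : Fin 3 → ℝ :=
  fun i => deriv (fun v => f (p.1, v) i) p.2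

private lemma pu_eq {f : ℝ × ℝ → Fin 3 → ℝ} {q : ℝ × ℝ} (hf : DifferentiableAt ℝ f q) :
    pu f q = fderiv ℝ f q (1, 0) := by
  funext i
  have h := hasDerivAt_lineU hf.hasFDerivAt
  have h2 : HasDerivAt (fun u => f (u, q.2) i) (fderiv ℝ f q (1, 0) i) q.1 :=
    ((ContinuousLinearMap.proj (R := ℝ) (φ := fun _ : Fin 3 => ℝ) i).hasFDerivAt).comp_hasDerivAt
      q.1 h
  exact h2.deriv

private lemma pv_eq {f : ℝ × ℝ → Fin 3 → ℝ} {q : ℝ × ℝ} (hf : DifferentiableAt ℝ f q) :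
    pv f q = fderiv ℝ f q (0, 1) := by
  funext i
  have h := hasDerivAt_lineV hf.hasFDerivAt
  have h2 : HasDerivAt (fun v => f (q.1, v) i) (fderiv ℝ f q (0, 1) i) q.2 :=
    ((ContinuousLinearMap.proj (R := ℝ) (φ := fun _ : Fin 3 => ℝ) i).hasFDerivAt).comp_hasDerivAt
      q.2 h
  exact h2.deriv

private lemma diffAt_cross {a b : ℝ × ℝ → Fin 3 → ℝ} {p : ℝ × ℝ}
    (ha : DifferentiableAt ℝ a p) (hb : DifferentiableAt ℝ b p) :
    DifferentiableAt ℝ (fun q => a q ⨯₃ b q) p := by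
  have hai : ∀ j, DifferentiableAt ℝ (fun q => a q j) p := fun j => (differentiableAt_pi.mp ha) j
  have hbi : ∀ j, DifferentiableAt ℝ (fun q => b q j) p := fun j => (differentiableAt_pi.mp hb) j
  rw [differentiableAt_pi]
  intro i
  simp only [cross_apply]
  fin_cases i <;> simp <;>
    exact DifferentiableAt.sub (DifferentiableAt.mul (hai _) (hbi _))
      (DifferentiableAt.mul (hai _) (hbi _))

private lemma mixed_symm {f : ℝ × ℝ → ℝ} {U : Set (ℝ × ℝ)} (hU : IsOpen U)
    (hf : ContDiffOn ℝ (⊤ : ℕ∞) f U) {p : ℝ × ℝ} (hp : p ∈ U) :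
    deriv (fun v => deriv (fun u => f (u, v)) p.1) p.2
      = deriv (fun u => deriv (fun v => f (u, v)) p.2) p.1 := by
  have hdiff : ∀ q ∈ U, HasFDerivAt f (fderiv ℝ f q) q := fun q hq =>
    (diffAt_of_contDiffOn hU hf hq).hasFDerivAt
  have hF : ContDiffOn ℝ (⊤ : ℕ∞) (fderiv ℝ f) U := hf.fderiv_of_isOpen hU (by simp)
  have hFd : DifferentiableAt ℝ (fderiv ℝ f) p := diffAt_of_contDiffOn hU hF hp
  set f'' := fderiv ℝ (fderiv ℝ f) p with hf''
  have hsymm : f'' (0, 1) (1, 0) = f'' (1, 0) (0, 1) :=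
    second_derivative_symmetric_of_eventually
      (Filter.eventually_of_mem (hU.mem_nhds hp) hdiff) hFd.hasFDerivAt (0, 1) (1, 0)
  have hlv : ∀ᶠ v in 𝓝 p.2, (p.1, v) ∈ U :=
    ((continuous_const.prodMk continuous_id).continuousAt).preimage_mem_nhds
      (hU.mem_nhds (by simpa using hp))
  have hlu : ∀ᶠ u in 𝓝 p.1, (u, p.2) ∈ U :=
    ((continuous_id.prodMk continuous_const).continuousAt).preimage_mem_nhds
      (hU.mem_nhds (by simpa using hp))
  -- left side
  have hEv : (fun v => deriv (fun u => f (u, v)) p.1) =ᶠ[𝓝 p.2]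
      fun v => fderiv ℝ f (p.1, v) (1, 0) := by
    filter_upwards [hlv] with v hv
    exact (hasDerivAt_lineU (hdiff _ hv)).deriv
  have hG1 : HasFDerivAt (fun q => fderiv ℝ f q (1, 0))
      ((ContinuousLinearMap.apply ℝ ℝ ((1 : ℝ), (0 : ℝ))).comp f'') p :=
    ((ContinuousLinearMap.apply ℝ ℝ ((1 : ℝ), (0 : ℝ))).hasFDerivAt).comp p hFd.hasFDerivAt
  have hL : deriv (fun v => deriv (fun u => f (u, v)) p.1) p.2 = f'' (0, 1) (1, 0) := by
    rw [hEv.deriv_eq]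
    exact (hasDerivAt_lineV hG1).deriv
  -- right side
  have hEu : (fun u => deriv (fun v => f (u, v)) p.2) =ᶠ[𝓝 p.1]
      fun u => fderiv ℝ f (u, p.2) (0, 1) := by
    filter_upwards [hlu] with u hu
    exact (hasDerivAt_lineV (hdiff _ hu)).deriv
  have hG2 : HasFDerivAt (fun q => fderiv ℝ f q (0, 1))
      ((ContinuousLinearMap.apply ℝ ℝ ((0 : ℝ), (1 : ℝ))).comp f'') p :=
    ((ContinuousLinearMap.apply ℝ ℝ ((0 : ℝ), (1 : ℝ))).hasFDerivAt).comp p hFd.hasFDerivAt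
  have hR : deriv (fun u => deriv (fun v => f (u, v)) p.2) p.1 = f'' (1, 0) (0, 1) := by
    rw [hEu.deriv_eq]
    exact (hasDerivAt_lineU hG2).deriv
  rw [hL, hR, hsymm]
theorem darboux_additional_equation
    (U : Set (ℝ × ℝ)) (hU : IsOpen U)
    (x y n : ℝ × ℝ → Fin 3 → ℝ) (lam h11 h12 h21 h22 : ℝ × ℝ → ℝ)
    (hx : ContDiffOn ℝ (⊤ : ℕ∞) x U) (hy : ContDiffOn ℝ (⊤ : ℕ∞) y U)
    (hlam : ∀ p ∈ U, 0 < lam p)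
    (hiso1 : ∀ p ∈ U, pu x p ⬝ᵥ pu x p = lam p)
    (hiso2 : ∀ p ∈ U, pv x p ⬝ᵥ pv x p = lam p)
    (hiso3 : ∀ p ∈ U, pu x p ⬝ᵥ pv x p = 0)
    (hn : ∀ p ∈ U, n p = (lam p)⁻¹ • crossProduct (pu x p) (pv x p))
    (hh11 : ∀ p ∈ U, h11 p = -(pu x p ⬝ᵥ pu n p))
    (hh12 : ∀ p ∈ U, h12 p = -(pu x p ⬝ᵥ pv n p))
    (hh21 : ∀ p ∈ U, h21 p = -(pv x p ⬝ᵥ pu n p))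
    (hh22 : ∀ p ∈ U, h22 p = -(pv x p ⬝ᵥ pv n p))
    (hW1 : ∀ p ∈ U, pu n p = -((lam p)⁻¹ • (h11 p • pu x p + h12 p • pv x p)))
    (hW2 : ∀ p ∈ U, pv n p = -((lam p)⁻¹ • (h21 p • pu x p + h22 p • pv x p)))
    (hy1 : ∀ p ∈ U, pu y p ⬝ᵥ n p = 0)
    (hy2 : ∀ p ∈ U, pv y p ⬝ᵥ n p = 0) :
    ∀ p ∈ U,
      h21 p * (pu y p ⬝ᵥ pu x p) + h22 p * (pu y p ⬝ᵥ pv x p)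
        - h11 p * (pv y p ⬝ᵥ pu x p) - h12 p * (pv y p ⬝ᵥ pv x p) = 0 := by
  rintro ⟨p1, p2⟩ hp
  have hUn : U ∈ 𝓝 ((p1, p2) : ℝ × ℝ) := hU.mem_nhds hp
  have hlv : ∀ᶠ v in 𝓝 p2, ((p1, v) : ℝ × ℝ) ∈ U :=
    ((continuous_const.prodMk continuous_id).continuousAt).preimage_mem_nhds hUn
  have hlu : ∀ᶠ u in 𝓝 p1, ((u, p2) : ℝ × ℝ) ∈ U :=
    ((continuous_id.prodMk continuous_const).continuousAt).preimage_mem_nhds hUn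
  have hdx : ∀ q ∈ U, DifferentiableAt ℝ x q := fun q hq => diffAt_of_contDiffOn hU hx hq
  have hdy : ∀ q ∈ U, DifferentiableAt ℝ y q := fun q hq => diffAt_of_contDiffOn hU hy hq
  have hDuY : ContDiffOn ℝ (⊤ : ℕ∞) (fun q => fderiv ℝ y q ((1 : ℝ), (0 : ℝ))) U :=
    (hy.fderiv_of_isOpen hU (by simp)).clm_apply contDiffOn_const
  have hDvY : ContDiffOn ℝ (⊤ : ℕ∞) (fun q => fderiv ℝ y q ((0 : ℝ), (1 : ℝ))) U :=
    (hy.fderiv_of_isOpen hU (by simp)).clm_apply contDiffOn_const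
  have hDuX : ContDiffOn ℝ (⊤ : ℕ∞) (fun q => fderiv ℝ x q ((1 : ℝ), (0 : ℝ))) U :=
    (hx.fderiv_of_isOpen hU (by simp)).clm_apply contDiffOn_const
  have hDvX : ContDiffOn ℝ (⊤ : ℕ∞) (fun q => fderiv ℝ x q ((0 : ℝ), (1 : ℝ))) U :=
    (hx.fderiv_of_isOpen hU (by simp)).clm_apply contDiffOn_const
  -- a globally defined smooth substitute for `n`
  set L : ℝ × ℝ → ℝ := fun q => fderiv ℝ x q (1, 0) ⬝ᵥ fderiv ℝ x q (1, 0) with hLdef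
  set N : ℝ × ℝ → Fin 3 → ℝ :=
    fun q => (L q)⁻¹ • (fderiv ℝ x q (1, 0) ⨯₃ fderiv ℝ x q (0, 1)) with hNdef
  have hnN : ∀ q ∈ U, n q = N q := by
    intro q hq
    rw [hn q hq, hNdef]
    simp only [hLdef]
    rw [← pu_eq (hdx q hq), ← pv_eq (hdx q hq), hiso1 q hq]
  have hax : DifferentiableAt ℝ (fun q => fderiv ℝ x q ((1 : ℝ), (0 : ℝ))) (p1, p2) :=
    diffAt_of_contDiffOn hU hDuX hp
  have hbx : DifferentiableAt ℝ (fun q => fderiv ℝ x q ((0 : ℝ), (1 : ℝ))) (p1, p2) :=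
    diffAt_of_contDiffOn hU hDvX hp
  have hLdiff : DifferentiableAt ℝ L (p1, p2) := by
    have haxj := differentiableAt_pi.mp hax
    rw [hLdef]
    simp only [dotProduct]
    exact DifferentiableAt.fun_sum fun j _ => (haxj j).mul (haxj j)
  have hLne : L (p1, p2) ≠ 0 := by
    have h' : L (p1, p2) = pu x (p1, p2) ⬝ᵥ pu x (p1, p2) := by
      rw [pu_eq (hdx _ hp)]
    have : L (p1, p2) = lam (p1, p2) := by rw [h', hiso1 _ hp]
    rw [this]; exact (hlam _ hp).ne'
  have hNdiff : DifferentiableAt ℝ N (p1, p2) := by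
    rw [hNdef]
    exact (hLdiff.inv hLne).smul (diffAt_cross hax hbx)
  -- derivative facts for the v-direction
  have hA : ∀ i : Fin 3, HasDerivAt (fun v => pu y (p1, v) i) (pv (pu y) (p1, p2) i) p2 := by
    intro i
    have hev : (fun v => pu y (p1, v) i) =ᶠ[𝓝 p2]
        (fun v => fderiv ℝ y (p1, v) ((1 : ℝ), (0 : ℝ)) i) := by
      filter_upwards [hlv] with v hv
      exact congrFun (pu_eq (hdy _ hv)) i
    have h1 : DifferentiableAt ℝ (fun q => fderiv ℝ y q ((1 : ℝ), (0 : ℝ)) i) (p1, p2) :=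
      differentiableAt_pi.mp (diffAt_of_contDiffOn hU hDuY hp) i
    have hΦ : DifferentiableAt ℝ (fun v => fderiv ℝ y (p1, v) ((1 : ℝ), (0 : ℝ)) i) p2 :=
      (hasDerivAt_lineV h1.hasFDerivAt).differentiableAt
    exact (hΦ.congr_of_eventuallyEq hev).hasDerivAt
  have hB : ∀ i : Fin 3, HasDerivAt (fun v => n (p1, v) i) (pv n (p1, p2) i) p2 := by
    intro i
    have hev : (fun v => n (p1, v) i) =ᶠ[𝓝 p2] (fun v => N (p1, v) i) := by
      filter_upwards [hlv] with v hv
      exact congrFun (hnN _ hv) i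
    have h1 : DifferentiableAt ℝ (fun q => N q i) (p1, p2) := differentiableAt_pi.mp hNdiff i
    have hΦ : DifferentiableAt ℝ (fun v => N (p1, v) i) p2 :=
      (hasDerivAt_lineV h1.hasFDerivAt).differentiableAt
    exact (hΦ.congr_of_eventuallyEq hev).hasDerivAt
  -- derivative facts for the u-direction
  have hA' : ∀ i : Fin 3, HasDerivAt (fun u => pv y (u, p2) i) (pu (pv y) (p1, p2) i) p1 := by
    intro i
    have hev : (fun u => pv y (u, p2) i) =ᶠ[𝓝 p1]
        (fun u => fderiv ℝ y (u, p2) ((0 : ℝ), (1 : ℝ)) i) := by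
      filter_upwards [hlu] with u hu
      exact congrFun (pv_eq (hdy _ hu)) i
    have h1 : DifferentiableAt ℝ (fun q => fderiv ℝ y q ((0 : ℝ), (1 : ℝ)) i) (p1, p2) :=
      differentiableAt_pi.mp (diffAt_of_contDiffOn hU hDvY hp) i
    have hΦ : DifferentiableAt ℝ (fun u => fderiv ℝ y (u, p2) ((0 : ℝ), (1 : ℝ)) i) p1 :=
      (hasDerivAt_lineU h1.hasFDerivAt).differentiableAt
    exact (hΦ.congr_of_eventuallyEq hev).hasDerivAt
  have hB' : ∀ i : Fin 3, HasDerivAt (fun u => n (u, p2) i) (pu n (p1, p2) i) p1 := by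
    intro i
    have hev : (fun u => n (u, p2) i) =ᶠ[𝓝 p1] (fun u => N (u, p2) i) := by
      filter_upwards [hlu] with u hu
      exact congrFun (hnN _ hu) i
    have h1 : DifferentiableAt ℝ (fun q => N q i) (p1, p2) := differentiableAt_pi.mp hNdiff i
    have hΦ : DifferentiableAt ℝ (fun u => N (u, p2) i) p1 :=
      (hasDerivAt_lineU h1.hasFDerivAt).differentiableAt
    exact (hΦ.congr_of_eventuallyEq hev).hasDerivAt
  -- equation (I): differentiate (y_u · n) = 0 in v
  have eqI : ∑ i : Fin 3, (pv (pu y) (p1, p2) i * n (p1, p2) i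
      + pu y (p1, p2) i * pv n (p1, p2) i) = 0 := by
    have hSum : HasDerivAt (fun v => ∑ i : Fin 3, pu y (p1, v) i * n (p1, v) i)
        (∑ i : Fin 3, (pv (pu y) (p1, p2) i * n (p1, p2) i
          + pu y (p1, p2) i * pv n (p1, p2) i)) p2 :=
      HasDerivAt.fun_sum fun i _ => (hA i).mul (hB i)
    have hzero : (fun v => ∑ i : Fin 3, pu y (p1, v) i * n (p1, v) i)
        =ᶠ[𝓝 p2] fun _ => (0 : ℝ) := by
      filter_upwards [hlv] with v hv
      simpa [dotProduct] using hy1 (p1, v) hv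
    rw [← hSum.deriv, hzero.deriv_eq, deriv_const]
  -- equation (II): differentiate (y_v · n) = 0 in u
  have eqII : ∑ i : Fin 3, (pu (pv y) (p1, p2) i * n (p1, p2) i
      + pv y (p1, p2) i * pu n (p1, p2) i) = 0 := by
    have hSum : HasDerivAt (fun u => ∑ i : Fin 3, pv y (u, p2) i * n (u, p2) i)
        (∑ i : Fin 3, (pu (pv y) (p1, p2) i * n (p1, p2) i
          + pv y (p1, p2) i * pu n (p1, p2) i)) p1 :=
      HasDerivAt.fun_sum fun i _ => (hA' i).mul (hB' i)
    have hzero : (fun u => ∑ i : Fin 3, pv y (u, p2) i * n (u, p2) i)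
        =ᶠ[𝓝 p1] fun _ => (0 : ℝ) := by
      filter_upwards [hlu] with u hu
      simpa [dotProduct] using hy2 (u, p2) hu
    rw [← hSum.deriv, hzero.deriv_eq, deriv_const]
  -- Clairaut: symmetry of mixed partials of y
  have hcl : ∀ i : Fin 3, pv (pu y) (p1, p2) i = pu (pv y) (p1, p2) i := by
    intro i
    have hyi : ContDiffOn ℝ (⊤ : ℕ∞) (fun q => y q i) U :=
      (ContinuousLinearMap.proj (R := ℝ) (φ := fun _ : Fin 3 => ℝ) i).contDiff.comp_contDiffOn hy
    exact mixed_symm hU hyi hp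
  -- the key identity y_u · n_v = y_v · n_u
  have hkey : pu y (p1, p2) ⬝ᵥ pv n (p1, p2) = pv y (p1, p2) ⬝ᵥ pu n (p1, p2) := by
    simp only [dotProduct, Fin.sum_univ_three] at eqI eqII ⊢
    rw [hcl 0, hcl 1, hcl 2] at eqI
    linarith
  -- substitute the Weingarten equations and finish
  rw [hW1 _ hp, hW2 _ hp] at hkey
  have hlp := hlam _ hp
  simp only [dotProduct_neg, dotProduct_smul, dotProduct_add, smul_eq_mul, neg_inj] at hkey
  have hcancel := mul_left_cancel₀ (inv_ne_zero hlp.ne') hkey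
  linarith
end

section
/- For every (u,v) ∈ ℝ², the 4×6 real matrix A(u,v) with rows (2u, 2v, u²+v²−1, 0, 0, 0), (0, 0, 0, 2u, 2v, u²+v²−1), (−u²+v²+1, −2uv, 2u, −2uv, u²−v²+1, 2v), (−2uv, u²−v²+1, 2v, −(−u²+v²+1), 2uv, −2u) has rank exactly 4. -/
open Matrix

/-- The 4×6 matrix of the system (8)–(11) for the stereographic sphere. -/
noncomputable def sphA (u v : ℝ) : Matrix (Fin 4) (Fin 6) ℝ :=
  !![2*u, 2*v, u^2+v^2-1, 0, 0, 0;
     0, 0, 0, 2*u, 2*v, u^2+v^2-1;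
     -u^2+v^2+1, -2*u*v, 2*u, -2*u*v, u^2-v^2+1, 2*v;
     -2*u*v, u^2-v^2+1, 2*v, -(-u^2+v^2+1), 2*u*v, -2*u]

/-!
A 4×6 matrix has rank 4 as soon as one 4×4 minor is nonzero. Two minors suffice: deleting
columns 3 and 6 (counted from 1) gives determinant 4(u²+v²)(u²+v²+1)², which vanishes only
at the origin, and deleting columns 2 and 5 gives (u²+v²+1)²(u²+(v−1)²)(u²+(v+1)²), which
equals 1 there.
-/

theorem Matrix.rank_eq_card_of_isUnit_det_submatrix {m n R : Type*} [Fintype m] [DecidableEq m]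
    [Fintype n] [CommRing R] [StrongRankCondition R] (A : Matrix m n R) (c : m → n)
    (h : IsUnit (A.submatrix id c).det) : A.rank = Fintype.card m :=
  A.rank_le_card_height.antisymm <| by
    simpa [rank_of_isUnit _ ((isUnit_iff_isUnit_det _).mpr h)] using A.rank_submatrix_le id c

lemma det_sphA_submatrix_0134 (u v : ℝ) :
    ((sphA u v).submatrix id ![0, 1, 3, 4]).det = 4 * (u^2 + v^2) * (u^2 + v^2 + 1)^2 := by
  simp [sphA, det_succ_row_zero, Fin.sum_univ_succ, Fin.succAbove]
  ring

lemma det_sphA_submatrix_0235 (u v : ℝ) :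
    ((sphA u v).submatrix id ![0, 2, 3, 5]).det =
      (u^2 + v^2 + 1)^2 * (u^2 + (v - 1)^2) * (u^2 + (v + 1)^2) := by
  simp [sphA, det_succ_row_zero, Fin.sum_univ_succ, Fin.succAbove]
  ring

theorem sphere_matrix_rank_four (u v : ℝ) : (sphA u v).rank = 4 := by
  by_cases h : u = 0 ∧ v = 0
  · obtain ⟨rfl, rfl⟩ := h
    refine (sphA 0 0).rank_eq_card_of_isUnit_det_submatrix ![0, 2, 3, 5] (IsUnit.mk0 _ ?_)
    norm_num [det_sphA_submatrix_0235]
  · refine (sphA u v).rank_eq_card_of_isUnit_det_submatrix ![0, 1, 3, 4] (IsUnit.mk0 _ ?_)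
    have hpos : 0 < u^2 + v^2 := by
      rcases not_and_or.mp h with h | h <;> positivity
    rw [det_sphA_submatrix_0134]
    positivity
end

section
/- For all u, v ∈ ℝ and all t ∈ (0, π), the 4×6 matrix B(u,v,t) from the helicoid–catenoid family has rank exactly 4. -/
open Matrix Real

/-- The 4×6 matrix of the system (8)–(11) for the helicoid–catenoid family. -/
noncomputable def helB (u v t : ℝ) : Matrix (Fin 4) (Fin 6) ℝ :=
  !![cos u, sin u, -sinh v, 0, 0, 0;
     0, 0, 0, cos u, sin u, -sinh v;
     cos t * cos u * sinh v - sin t * sin u * cosh v,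
       cos t * sin u * sinh v + sin t * cos u * cosh v, cos t,
       cos t * sin u * cosh v + sin t * cos u * sinh v,
       -(cos t * cos u * cosh v) + sin t * sin u * sinh v, sin t;
     cos u * sinh v, sin u * sinh v, 1, -(sin u * cosh v), cos u * cosh v, 0]

/-! The minor `B₃₆` of `helB u v t` (columns 3 and 6 deleted) is `-(sin t) (cosh v)²`, which does not
vanish for `t ∈ (0, π)`; a nonvanishing maximal minor forces full row rank. -/

theorem Matrix.rank_eq_card_height_of_det_submatrix_mem_nonZeroDivisors
    {m n R : Type*} [Fintype m] [DecidableEq m] [Fintype n] [CommRing R] [Nontrivial R]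
    (A : Matrix m n R) (c : m → n) (h : (A.submatrix id c).det ∈ nonZeroDivisors R) :
    A.rank = Fintype.card m :=
  le_antisymm A.rank_le_card_height <|
    (rank_of_det_mem_nonZeroDivisors h).symm.trans_le (A.rank_submatrix_le id c)

theorem det_helB_submatrix (u v t : ℝ) :
    ((helB u v t).submatrix id ![0, 1, 3, 4]).det = -(sin t * cosh v ^ 2) := by
  have hcs := sin_sq_add_cos_sq u
  rw [det_succ_row_zero, Fin.sum_univ_four]
  simp only [det_fin_three, helB, submatrix_apply, of_apply, Fin.succAbove, id_eq, cons_val,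
    Fin.reduceSucc, Fin.reduceCastSucc, Fin.reduceLT, ↓reduceIte, Fin.coe_ofNat_eq_mod]
  linear_combination (-(sin t * cosh v ^ 2) * (cos u ^ 2 + sin u ^ 2 + 1)) * hcs

theorem helicoid_matrix_rank_four (u v t : ℝ) (ht : t ∈ Set.Ioo 0 Real.pi) :
    (helB u v t).rank = 4 := by
  have hdet : ((helB u v t).submatrix id ![0, 1, 3, 4]).det ≠ 0 := by
    rw [det_helB_submatrix, neg_ne_zero]
    exact (mul_pos (sin_pos_of_pos_of_lt_pi ht.1 ht.2) (pow_pos (cosh_pos v) 2)).ne'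
  simpa using (helB u v t).rank_eq_card_height_of_det_submatrix_mem_nonZeroDivisors _
    (mem_nonZeroDivisors_of_ne_zero hdet)
end

section
/- Let x_u = (x₁ᵤ, x₂ᵤ, x₃ᵤ), x_v = (x₁ᵥ, x₂ᵥ, x₃ᵥ) ∈ ℝ³ satisfy the isothermal conditions x_u · x_u = λ = x_v · x_v, x_u · x_v = 0, λ > 0, let n = (n₁, n₂, n₃) = λ⁻¹(x_u × x_v), and let h₁₁, h₁₂, h₂₂ be real numbers. Let D be the 4×4 matrix with rows (n₁, n₂, 0, 0), (0, 0, n₁, n₂), (x₁ᵤ, x₂ᵤ, x₁ᵥ, x₂ᵥ), (h₁₂x₁ᵤ + h₂₂x₁ᵥ, h₁₂x₂ᵤ + h₂₂x₂ᵥ, −(h₁₁x₁ᵤ + h₁₂x₁ᵥ), −(h₁₁x₂ᵤ + h₁₂x₂ᵥ)). Then det D = h₁₁ x₃ᵥ² − 2 h₁₂ x₃ᵤ x₃ᵥ + h₂₂ x₃ᵤ². -/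
/-!
Expanding the determinant by pairs of rows (generalized Laplace expansion along the first two
columns) leaves only products of the 2×2 minors `n₀ w₁ - n₁ w₀ = (n × w)₃`. For an isothermal
frame the unit normal satisfies `n × x_u = x_v` and `x_v × n = x_u`, so these minors are
`x_v₃` for `w = x_u` and `-x_u₃` for `w = x_v`, and the determinant becomes a quadratic form
in `(x_v₃, -x_u₃)` with coefficients `h₁₁, h₁₂, h₂₂`.
-/

open Matrix

theorem det_fin_four_of_top_rows_kronecker {R : Type*} [CommRing R]
    (n₀ n₁ a₀ a₁ b₀ b₁ c₀ c₁ d₀ d₁ : R) :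
    !![n₀, n₁, 0, 0; 0, 0, n₀, n₁; a₀, a₁, b₀, b₁; c₀, c₁, d₀, d₁].det =
      (n₀ * c₁ - n₁ * c₀) * (n₀ * b₁ - n₁ * b₀) - (n₀ * a₁ - n₁ * a₀) * (n₀ * d₁ - n₁ * d₀) := by
  simp [det_succ_row_zero, Fin.sum_univ_succ, Fin.succAbove]
  ring

section IsothermalFrame

variable {K : Type*} [Field K] {lam : K} {xu xv : Fin 3 → K}

theorem inv_smul_cross_cross_left (hlam : lam ≠ 0) (hu : xu ⬝ᵥ xu = lam) (huv : xu ⬝ᵥ xv = 0) :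
    (lam⁻¹ • xu ⨯₃ xv) ⨯₃ xu = xv := by
  rw [LinearMap.map_smul₂, cross_cross_eq_smul_sub_smul, hu, dotProduct_comm, huv, zero_smul,
    sub_zero, smul_smul, inv_mul_cancel₀ hlam, one_smul]

theorem cross_inv_smul_cross_right (hlam : lam ≠ 0) (hv : xv ⬝ᵥ xv = lam) (huv : xu ⬝ᵥ xv = 0) :
    xv ⨯₃ (lam⁻¹ • xu ⨯₃ xv) = xu := by
  rw [map_smul, cross_cross_eq_smul_sub_smul', hv, huv, zero_smul, sub_zero,
    smul_smul, inv_mul_cancel₀ hlam, one_smul]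

end IsothermalFrame

theorem darboux_system_determinant (lam : ℝ) (xu xv : Fin 3 → ℝ)
    (hlam : 0 < lam)
    (h1 : xu ⬝ᵥ xu = lam) (h2 : xv ⬝ᵥ xv = lam) (h3 : xu ⬝ᵥ xv = 0)
    (n : Fin 3 → ℝ) (hn : n = lam⁻¹ • crossProduct xu xv)
    (h11 h12 h22 : ℝ)
    (D : Matrix (Fin 4) (Fin 4) ℝ)
    (hD : D = !![n 0, n 1, 0, 0;
                 0, 0, n 0, n 1;
                 xu 0, xu 1, xv 0, xv 1;
                 h12 * xu 0 + h22 * xv 0, h12 * xu 1 + h22 * xv 1,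
                   -(h11 * xu 0 + h12 * xv 0), -(h11 * xu 1 + h12 * xv 1)]) :
    D.det = h11 * (xv 2) ^ 2 - 2 * h12 * (xu 2) * (xv 2) + h22 * (xu 2) ^ 2 := by
  have hnu : n 0 * xu 1 - n 1 * xu 0 = xv 2 := by
    rw [← inv_smul_cross_cross_left hlam.ne' h1 h3, ← hn, cross_apply]; rfl
  have hnv : n 0 * xv 1 - n 1 * xv 0 = -xu 2 := by
    rw [← cross_inv_smul_cross_right hlam.ne' h2 h3, ← hn, cross_apply]
    simp only [cons_val]
    ring
  rw [hD, det_fin_four_of_top_rows_kronecker]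
  linear_combination
    (h11 * (n 0 * xu 1 - n 1 * xu 0 + xv 2) + 2 * h12 * (n 0 * xv 1 - n 1 * xv 0)) * hnu
      + (2 * h12 * xv 2 + h22 * (n 0 * xv 1 - n 1 * xv 0 - xu 2)) * hnv
end
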